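/- Let ℓ ≥ 3 be an integer and let 0 < θ < 2π/ℓ. Let C(φ) = ⋂_{k=0}^{ℓ−1} {x ∈ ℝ² : cos(2πk/ℓ + φ)·x₁ + sin(2πk/ℓ + φ)·x₂ ≤ 1}. Then the intersection of the topological frontiers of C(0) and C(θ) consists of exactly 2ℓ points. -/

import Mathlib

open Set

/-- A closed halfspace: `{x | f x ≤ a}` for a nonzero linear functional `f`. -/
def IsClosedHalfspace (V : Type*) [AddCommGroup V] [Module ℝ V] (h : Set V) : Prop :=
  ∃ (f : V →ₗ[ℝ] ℝ) (a : ℝ), f ≠ 0 ∧ h = {x | f x ≤ a}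

/-- A convex polyhedron: the intersection of finitely many closed halfspaces. -/
def IsPolyhedron (V : Type*) [AddCommGroup V] [Module ℝ V] (P : Set V) : Prop :=
  ∃ (k : ℕ) (H : Fin k → Set V), (∀ i, IsClosedHalfspace V (H i)) ∧ P = ⋂ i, H i

/-- `minFace P p` is the intersection of `P` with all hyperplanes `{x | f x = a}`
(`f` a nonzero linear functional) such that `f p = a` and `P ⊆ {x | f x ≤ a}`;
this is the face `F(p)` of `P` at `p`.  If there is no such hyperplane, it is `P`. -/
def minFace {V : Type*} [AddCommGroup V] [Module ℝ V] (P : Set V) (p : V) : Set V :=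
  P ∩ ⋂ (f : V →ₗ[ℝ] ℝ) (a : ℝ) (_ : f ≠ 0) (_ : f p = a) (_ : P ⊆ {x | f x ≤ a}),
    {x | f x = a}

/-- `p` is a vertex of the subdivision induced by the polyhedra `P j`:
the intersection of the faces `minFace (P j) p`, over all `j` with `p ∈ P j`,
equals `{p}`. -/
def IsSubdivVertex {V : Type*} [AddCommGroup V] [Module ℝ V] {ι : Type*}
    (P : ι → Set V) (p : V) : Prop :=
  (⋂ j ∈ {j | p ∈ P j}, minFace (P j) p) = {p}

/-- The regular ℓ-gon circumscribed about the unit circle, rotated by φ. -/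
def Cgon (ℓ : ℕ) (φ : ℝ) : Set (ℝ × ℝ) :=
  ⋂ k ∈ Finset.range ℓ, {x : ℝ × ℝ |
    Real.cos (2 * Real.pi * k / ℓ + φ) * x.1 + Real.sin (2 * Real.pi * k / ℓ + φ) * x.2 ≤ 1}


open Real

noncomputable def Lf (c : ℝ) (x : ℝ × ℝ) : ℝ := Real.cos c * x.1 + Real.sin c * x.2

lemma continuous_Lf (c : ℝ) : Continuous (Lf c) :=
  (continuous_const.mul continuous_fst).add (continuous_const.mul continuous_snd)

lemma mem_Cgon_iff {ℓ : ℕ} {φ : ℝ} {x : ℝ × ℝ} :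
    x ∈ Cgon ℓ φ ↔ ∀ k < ℓ, Lf (2 * π * k / ℓ + φ) x ≤ 1 := by
  simp [Cgon, Lf, Set.mem_iInter, Finset.mem_range]

lemma isClosed_Cgon (ℓ : ℕ) (φ : ℝ) : IsClosed (Cgon ℓ φ) := by
  apply isClosed_biInter
  intro k _
  exact isClosed_le (continuous_Lf _) continuous_const

lemma frontier_Cgon (ℓ : ℕ) (φ : ℝ) :
    frontier (Cgon ℓ φ) =
      {x | x ∈ Cgon ℓ φ ∧ ∃ k < ℓ, Lf (2 * π * k / ℓ + φ) x = 1} := by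
  rw [(isClosed_Cgon ℓ φ).frontier_eq]
  ext x
  simp only [mem_diff, mem_setOf_eq, and_congr_right_iff]
  intro hx
  constructor
  · intro hni
    by_contra h
    push_neg at h
    apply hni
    apply interior_maximal (t := ⋂ k ∈ Finset.range ℓ,
      {y : ℝ × ℝ | Lf (2 * π * k / ℓ + φ) y < 1})
    · intro y hy
      rw [mem_Cgon_iff]
      intro k hk
      have := Set.mem_iInter₂.1 hy k (Finset.mem_range.2 hk)
      exact le_of_lt this
    · exact isOpen_biInter_finset fun k _ => isOpen_lt (continuous_Lf _) continuous_const
    · rw [Set.mem_iInter₂]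
      intro k hk
      rw [Finset.mem_range] at hk
      exact lt_of_le_of_ne (mem_Cgon_iff.1 hx k hk) (h k hk)
  · rintro ⟨k, hk, hk1⟩ hint
    rw [mem_interior_iff_mem_nhds, Metric.mem_nhds_iff] at hint
    obtain ⟨ε, hε, hball⟩ := hint
    set c := 2 * π * k / ℓ + φ with hc
    have hy : (x.1 + ε / 2 * Real.cos c, x.2 + ε / 2 * Real.sin c) ∈ Metric.ball x ε := by
      rw [Metric.mem_ball]
      rw [Prod.dist_eq]
      simp only [Real.dist_eq]
      have h1 : |x.1 + ε / 2 * Real.cos c - x.1| ≤ ε / 2 := by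
        rw [show x.1 + ε / 2 * Real.cos c - x.1 = ε / 2 * Real.cos c by ring]
        rw [abs_mul, abs_of_pos (by linarith : (0:ℝ) < ε / 2)]
        nlinarith [abs_cos_le_one c, abs_nonneg (Real.cos c)]
      have h2 : |x.2 + ε / 2 * Real.sin c - x.2| ≤ ε / 2 := by
        rw [show x.2 + ε / 2 * Real.sin c - x.2 = ε / 2 * Real.sin c by ring]
        rw [abs_mul, abs_of_pos (by linarith : (0:ℝ) < ε / 2)]
        nlinarith [abs_sin_le_one c, abs_nonneg (Real.sin c)]
      exact lt_of_le_of_lt (max_le h1 h2) (by linarith)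
    have hyC := hball hy
    have := mem_Cgon_iff.1 hyC k hk
    rw [← hc] at this
    simp only [Lf] at this hk1
    nlinarith [sin_sq_add_cos_sq c]

noncomputable def pt (μ δ : ℝ) : ℝ × ℝ := (Real.cos μ / Real.cos δ, Real.sin μ / Real.cos δ)

lemma Lf_pt (c μ δ : ℝ) : Lf c (pt μ δ) = Real.cos (c - μ) / Real.cos δ := by
  simp only [Lf, pt, Real.cos_sub]
  ring

lemma cos_add_le {w δ : ℝ} (h1 : 0 ≤ Real.sin (w / 2)) (h2 : 0 ≤ Real.sin (w / 2 + δ)) :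
    Real.cos (w + δ) ≤ Real.cos δ := by
  have h := Real.cos_sub_cos (w + δ) δ
  rw [show (w + δ + δ) / 2 = w / 2 + δ by ring, show (w + δ - δ) / 2 = w / 2 by ring] at h
  nlinarith [mul_nonneg h2 h1]

/-- Key grid inequality: for `-π/ℓ < δ ≤ π/ℓ` and any integer `z`,
`cos (z·(2π/ℓ) + δ) ≤ cos δ`. -/
lemma grid_cos_le {ℓ : ℕ} (hℓ : 3 ≤ ℓ) {δ : ℝ} (hδ1 : -(π / ℓ) < δ) (hδ2 : δ ≤ π / ℓ)
    (z : ℤ) : Real.cos (z * (2 * π / ℓ) + δ) ≤ Real.cos δ := by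
  have hℓ0 : (0:ℝ) < ℓ := by positivity
  have hπℓ : 0 < π / ℓ := by positivity
  set t : ℤ := z % ℓ with ht
  have ht0 : 0 ≤ t := Int.emod_nonneg z (by positivity)
  have htl : t < ℓ := Int.emod_lt_of_pos z (by exact_mod_cast (by omega : 0 < ℓ))
  have hred : Real.cos (z * (2 * π / ℓ) + δ) = Real.cos (t * (2 * π / ℓ) + δ) := by
    have hz : z = t + ℓ * (z / ℓ) := by
      rw [ht]; exact (Int.emod_add_mul_ediv z ℓ).symm
    rw [show (z : ℝ) * (2 * π / ℓ) + δ = (t * (2 * π / ℓ) + δ) + (z / ℓ : ℤ) * (2 * π) by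
      rw [show ((z:ℝ)) = (t:ℝ) + (ℓ:ℝ) * ((z / ℓ : ℤ):ℝ) by exact_mod_cast congrArg Int.cast hz
      ]
      field_simp
      ring]
    exact Real.cos_add_int_mul_two_pi _ _
  rw [hred]
  rcases eq_or_lt_of_le ht0 with h0 | h0
  · rw [← h0]
    simp
  · -- 1 ≤ t < ℓ
    have h1t : (1:ℝ) ≤ (t:ℝ) := by exact_mod_cast h0
    have htl' : (t:ℝ) ≤ (ℓ:ℝ) - 1 := by
      have h' : t ≤ (ℓ:ℤ) - 1 := by omega
      have h'' : (t:ℝ) ≤ (((ℓ:ℤ) - 1 : ℤ):ℝ) := by exact_mod_cast h'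
      push_cast at h''
      linarith
    apply cos_add_le
    · apply Real.sin_nonneg_of_nonneg_of_le_pi
      · positivity
      · rw [show (t:ℝ) * (2 * π / ℓ) / 2 = (t:ℝ) * π / ℓ by ring]
        rw [div_le_iff₀ hℓ0]
        nlinarith [Real.pi_pos]
    · apply Real.sin_nonneg_of_nonneg_of_le_pi
      · have : π / ℓ ≤ (t:ℝ) * (2 * π / ℓ) / 2 := by
          rw [show (t:ℝ) * (2 * π / ℓ) / 2 = (t:ℝ) * (π / ℓ) by ring]
          nlinarith
        linarith
      · have : (t:ℝ) * (2 * π / ℓ) / 2 ≤ π - π / ℓ := by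
          rw [show (t:ℝ) * (2 * π / ℓ) / 2 = (t:ℝ) * (π / ℓ) by ring]
          have := mul_le_mul_of_nonneg_right htl' (le_of_lt hπℓ)
          calc (t:ℝ) * (π / ℓ) ≤ ((ℓ:ℝ) - 1) * (π / ℓ) := this
            _ = π - π / ℓ := by field_simp
        linarith

-- real work starts here
lemma cos_grid_congr {ℓ : ℕ} (hℓ0 : 0 < ℓ) {z w : ℤ} (h : (ℓ:ℤ) ∣ (z - w)) (δ : ℝ) :
    Real.cos (z * (2 * π / ℓ) + δ) = Real.cos (w * (2 * π / ℓ) + δ) := by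
  obtain ⟨n, hn⟩ := h
  have hz : (z:ℝ) = w + ℓ * n := by exact_mod_cast congrArg Int.cast (by linarith [hn] : z = w + ℓ * n)
  have hℓ0' : (ℓ:ℝ) ≠ 0 := by positivity
  rw [show (z:ℝ) * (2 * π / ℓ) + δ = (w * (2 * π / ℓ) + δ) + n * (2 * π) by
    rw [hz]; field_simp; ring]
  exact Real.cos_add_int_mul_two_pi _ _

noncomputable def Ppt (ℓ : ℕ) (θ : ℝ) (j : ℕ) : ℝ × ℝ := pt (2 * π * j / ℓ + θ / 2) (θ / 2)
noncomputable def Qpt (ℓ : ℕ) (θ : ℝ) (j : ℕ) : ℝ × ℝ :=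
  pt (2 * π * j / ℓ + (θ - 2 * π / ℓ) / 2) ((θ - 2 * π / ℓ) / 2)

lemma Ppt_spec {ℓ : ℕ} (hℓ : 3 ≤ ℓ) {θ : ℝ} (hθ0 : 0 < θ) (hθ : θ < 2 * π / ℓ)
    {j : ℕ} (hj : j < ℓ) :
    (Ppt ℓ θ j ∈ Cgon ℓ 0 ∧ Lf (2 * π * j / ℓ + 0) (Ppt ℓ θ j) = 1) ∧
    (Ppt ℓ θ j ∈ Cgon ℓ θ ∧ Lf (2 * π * j / ℓ + θ) (Ppt ℓ θ j) = 1) := by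
  have hℓ0 : (0:ℝ) < ℓ := by positivity
  have hπℓ : 0 < π / ℓ := by positivity
  have h2πℓ : 2 * π / (ℓ:ℝ) = 2 * (π / ℓ) := by ring
  have hθπ : θ / 2 < π / ℓ := by linarith
  have hπℓ2 : π / ℓ < π / 2 := by
    apply div_lt_div_of_pos_left Real.pi_pos (by norm_num)
    exact_mod_cast by omega
  have hcδ : 0 < Real.cos (θ / 2) :=
    Real.cos_pos_of_mem_Ioo ⟨by linarith, by linarith⟩
  refine ⟨⟨?_, ?_⟩, ?_, ?_⟩
  · rw [mem_Cgon_iff]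
    intro k hk
    rw [Ppt, Lf_pt, div_le_one hcδ]
    rw [show 2 * π * k / ℓ + 0 - (2 * π * j / ℓ + θ / 2)
        = ((((k:ℤ) - (j:ℤ) : ℤ)) : ℝ) * (2 * π / ℓ) + (-(θ/2)) by push_cast; ring]
    rw [show Real.cos (θ/2) = Real.cos (-(θ/2)) by rw [Real.cos_neg]]
    exact grid_cos_le hℓ (by linarith) (by linarith) _
  · rw [Ppt, Lf_pt, show 2 * π * j / ℓ + 0 - (2 * π * j / ℓ + θ / 2) = -(θ/2) by ring,
      Real.cos_neg, div_self (ne_of_gt hcδ)]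
  · rw [mem_Cgon_iff]
    intro k hk
    rw [Ppt, Lf_pt, div_le_one hcδ]
    rw [show 2 * π * k / ℓ + θ - (2 * π * j / ℓ + θ / 2)
        = ((((k:ℤ) - (j:ℤ) : ℤ)) : ℝ) * (2 * π / ℓ) + θ/2 by push_cast; ring]
    exact grid_cos_le hℓ (by linarith) (by linarith) _
  · rw [Ppt, Lf_pt, show 2 * π * j / ℓ + θ - (2 * π * j / ℓ + θ / 2) = θ/2 by ring,
      div_self (ne_of_gt hcδ)]

lemma Qpt_spec {ℓ : ℕ} (hℓ : 3 ≤ ℓ) {θ : ℝ} (hθ0 : 0 < θ) (hθ : θ < 2 * π / ℓ)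
    {j : ℕ} (hj : j < ℓ) :
    (Qpt ℓ θ j ∈ Cgon ℓ 0 ∧ Lf (2 * π * j / ℓ + 0) (Qpt ℓ θ j) = 1) ∧
    (Qpt ℓ θ j ∈ Cgon ℓ θ ∧
      Lf (2 * π * (((j + ℓ - 1) % ℓ : ℕ) : ℝ) / ℓ + θ) (Qpt ℓ θ j) = 1) := by
  have hℓ0 : (0:ℝ) < ℓ := by positivity
  have hℓ0' : 0 < ℓ := by omega
  have hπℓ : 0 < π / ℓ := by positivity
  have hπℓ2 : π / ℓ < π / 2 := by
    apply div_lt_div_of_pos_left Real.pi_pos (by norm_num)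
    exact_mod_cast by omega
  have h2πℓ : 2 * π / (ℓ:ℝ) = 2 * (π / ℓ) := by ring
  set δ : ℝ := (θ - 2 * π / ℓ) / 2 with hδdef
  have hδ1 : -(π/ℓ) < δ := by rw [hδdef]; rw [show (-(π/(ℓ:ℝ))) = (0 - 2*π/ℓ)/2 by ring]; gcongr
  have hδ2 : δ < 0 := by rw [hδdef]; linarith
  have hcδ : 0 < Real.cos δ :=
    Real.cos_pos_of_mem_Ioo ⟨by linarith, by linarith⟩
  refine ⟨⟨?_, ?_⟩, ?_, ?_⟩
  · rw [mem_Cgon_iff]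
    intro k hk
    rw [Qpt, ← hδdef, Lf_pt, div_le_one hcδ]
    rw [show 2 * π * k / ℓ + 0 - (2 * π * j / ℓ + δ)
        = ((((k:ℤ) - (j:ℤ) : ℤ)) : ℝ) * (2 * π / ℓ) + (-δ) by push_cast; ring]
    rw [show Real.cos δ = Real.cos (-δ) by rw [Real.cos_neg]]
    exact grid_cos_le hℓ (by linarith) (by linarith) _
  · rw [Qpt, ← hδdef, Lf_pt, show 2 * π * j / ℓ + 0 - (2 * π * j / ℓ + δ) = -δ by ring,
      Real.cos_neg, div_self (ne_of_gt hcδ)]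
  · rw [mem_Cgon_iff]
    intro k hk
    rw [Qpt, ← hδdef, Lf_pt, div_le_one hcδ]
    rw [show 2 * π * k / ℓ + θ - (2 * π * j / ℓ + δ)
        = ((((k:ℤ) - (j:ℤ) + 1 : ℤ)) : ℝ) * (2 * π / ℓ) + δ by rw [hδdef]; push_cast; ring]
    exact grid_cos_le hℓ (by linarith) (by linarith) _
  · rw [Qpt, ← hδdef, Lf_pt]
    set m : ℕ := (j + ℓ - 1) % ℓ with hm
    have key : Real.cos (2 * π * m / ℓ + θ - (2 * π * j / ℓ + δ)) = Real.cos δ := by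
      rw [show 2 * π * m / ℓ + θ - (2 * π * j / ℓ + δ)
          = ((((m:ℤ) - (j:ℤ) + 1 : ℤ)) : ℝ) * (2 * π / ℓ) + δ by rw [hδdef]; push_cast; ring]
      rw [cos_grid_congr hℓ0' (w := 0) ?_ δ]
      · norm_num
      · -- ℓ ∣ (m - j + 1 - 0)
        set q : ℕ := (j + ℓ - 1) / ℓ with hq
        have h2 : m + ℓ * q + 1 = j + ℓ := by
          rw [hm, hq, Nat.mod_add_div (j + ℓ - 1) ℓ]; omega
        have h3 : (m:ℤ) + ℓ * q + 1 = j + ℓ := by exact_mod_cast h2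
        exact ⟨1 - (q:ℤ), by linear_combination h3⟩
    rw [key, div_self (ne_of_gt hcδ)]

set_option maxHeartbeats 2000000 in
lemma inter_subset {ℓ : ℕ} (hℓ : 3 ≤ ℓ) {θ : ℝ} (hθ0 : 0 < θ) (hθ : θ < 2 * π / ℓ) :
    frontier (Cgon ℓ 0) ∩ frontier (Cgon ℓ θ) ⊆
      (Ppt ℓ θ) '' ↑(Finset.range ℓ) ∪ (Qpt ℓ θ) '' ↑(Finset.range ℓ) := by
  intro x hx
  obtain ⟨h0, hθf⟩ := hx
  rw [frontier_Cgon] at h0 hθf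
  obtain ⟨hx0, j, hj, hje⟩ := h0
  obtain ⟨hxθ, m, hm, hme⟩ := hθf
  have hℓ0 : (0:ℝ) < ℓ := by positivity
  have hℓ0' : 0 < ℓ := by omega
  have hℓne : (ℓ:ℝ) ≠ 0 := ne_of_gt hℓ0
  have hπ := Real.pi_pos
  have h2πℓ : 2 * π / (ℓ:ℝ) = 2 * (π / ℓ) := by ring
  have hπℓ : 0 < π / (ℓ:ℝ) := by positivity
  have hπℓ2 : π / (ℓ:ℝ) < π / 2 := by
    apply div_lt_div_of_pos_left Real.pi_pos (by norm_num)
    exact_mod_cast (by omega : 2 < ℓ)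
  simp only [Lf] at hje hme
  obtain ⟨δ0, hδ0⟩ : ∃ d : ℝ, d = ((2*π*m/ℓ + θ) - (2*π*j/ℓ)) / 2 := ⟨_, rfl⟩
  obtain ⟨μ0, hμ0⟩ : ∃ u : ℝ, u = 2*π*(j:ℝ)/ℓ + δ0 := ⟨_, rfl⟩
  have hca : Real.cos (2*π*(j:ℝ)/ℓ + 0) = Real.cos μ0 * Real.cos δ0 + Real.sin μ0 * Real.sin δ0 := by
    rw [show 2*π*(j:ℝ)/ℓ + 0 = μ0 - δ0 by rw [hμ0]; ring, Real.cos_sub]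
  have hsa : Real.sin (2*π*(j:ℝ)/ℓ + 0) = Real.sin μ0 * Real.cos δ0 - Real.cos μ0 * Real.sin δ0 := by
    rw [show 2*π*(j:ℝ)/ℓ + 0 = μ0 - δ0 by rw [hμ0]; ring, Real.sin_sub]
  have hcb : Real.cos (2*π*(m:ℝ)/ℓ + θ) = Real.cos μ0 * Real.cos δ0 - Real.sin μ0 * Real.sin δ0 := by
    rw [show 2*π*(m:ℝ)/ℓ + θ = μ0 + δ0 by rw [hμ0, hδ0]; ring, Real.cos_add]
  have hsb : Real.sin (2*π*(m:ℝ)/ℓ + θ) = Real.sin μ0 * Real.cos δ0 + Real.cos μ0 * Real.sin δ0 := by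
    rw [show 2*π*(m:ℝ)/ℓ + θ = μ0 + δ0 by rw [hμ0, hδ0]; ring, Real.sin_add]
  have hsum : Real.cos δ0 * (Real.cos μ0 * x.1 + Real.sin μ0 * x.2) = 1 := by
    linear_combination (hje + hme)/2 - (x.1/2)*hca - (x.2/2)*hsa - (x.1/2)*hcb - (x.2/2)*hsb
  have hdiff : Real.sin δ0 * (Real.sin μ0 * x.1 - Real.cos μ0 * x.2) = 0 := by
    linear_combination (hje - hme)/2 - (x.1/2)*hca - (x.2/2)*hsa + (x.1/2)*hcb + (x.2/2)*hsb
  have hcδ : Real.cos δ0 ≠ 0 := by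
    intro h; rw [h, zero_mul] at hsum; exact zero_ne_one hsum
  have hsδ : Real.sin δ0 ≠ 0 := by
    intro h
    obtain ⟨n, hn⟩ := Real.sin_eq_zero_iff.1 h
    have hth : θ = ((n * ℓ - m + j : ℤ) : ℝ) * (2 * π / ℓ) := by
      rw [hδ0] at hn
      push_cast
      field_simp at hn ⊢
      linarith [hn]
    set c : ℤ := n * ℓ - m + j with hc
    have hα : (0:ℝ) < 2 * π / ℓ := by positivity
    have hc0 : (0:ℝ) < (c:ℝ) := by
      by_contra hcon
      push_neg at hcon
      nlinarith [hth, hα]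
    have hc1 : (c:ℝ) < 1 := by
      by_contra hcon
      push_neg at hcon
      nlinarith [hth, hα]
    have hc0' : (0:ℤ) < c := by exact_mod_cast hc0
    have hc1' : c < 1 := by exact_mod_cast hc1
    omega
  have hdiff2 : Real.sin μ0 * x.1 - Real.cos μ0 * x.2 = 0 :=
    (mul_eq_zero.1 hdiff).resolve_left hsδ
  have hpyth := Real.sin_sq_add_cos_sq μ0
  have hx1 : x.1 * Real.cos δ0 = Real.cos μ0 := by
    linear_combination Real.cos μ0 * hsum + Real.cos δ0 * Real.sin μ0 * hdiff2
      - x.1 * Real.cos δ0 * hpyth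
  have hx2 : x.2 * Real.cos δ0 = Real.sin μ0 := by
    linear_combination Real.sin μ0 * hsum - Real.cos δ0 * Real.cos μ0 * hdiff2
      - x.2 * Real.cos δ0 * hpyth
  -- reduce δ0 mod π
  obtain ⟨n, hnd⟩ : ∃ n : ℤ, n = ⌊δ0 / π + 1 / 2⌋ := ⟨_, rfl⟩
  obtain ⟨δ', hδ'⟩ : ∃ d : ℝ, d = δ0 - n * π := ⟨_, rfl⟩
  obtain ⟨μ', hμ'⟩ : ∃ u : ℝ, u = μ0 - n * π := ⟨_, rfl⟩
  have hfl : (n:ℝ) ≤ δ0 / π + 1/2 := by rw [hnd]; exact Int.floor_le _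
  have hfl2 : δ0 / π + 1/2 < (n:ℝ) + 1 := by rw [hnd]; push_cast; exact Int.lt_floor_add_one _
  have e1 : (δ0 / π + 1/2) * π = δ0 + π/2 := by field_simp
  have h1 : (n:ℝ) * π ≤ δ0 + π/2 := by
    rw [← e1]; exact mul_le_mul_of_nonneg_right hfl hπ.le
  have h2 : δ0 + π/2 < ((n:ℝ) + 1) * π := by
    rw [← e1]; exact mul_lt_mul_of_pos_right hfl2 hπ
  have hδ'lo : -(π/2) ≤ δ' := by rw [hδ']; linarith
  have hδ'hi : δ' < π/2 := by rw [hδ']; push_cast at h2 ⊢; linarith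
  have hδ0eq : δ0 = δ' + n * π := by rw [hδ']; ring
  have hμ0eq : μ0 = μ' + n * π := by rw [hμ']; ring
  have hcosrel : Real.cos δ0 = (-1:ℝ)^n * Real.cos δ' := by
    rw [hδ0eq, Real.cos_add_int_mul_pi]
  have hcosμ : Real.cos μ0 = (-1:ℝ)^n * Real.cos μ' := by
    rw [hμ0eq, Real.cos_add_int_mul_pi]
  have hsinμ : Real.sin μ0 = (-1:ℝ)^n * Real.sin μ' := by
    rw [hμ0eq, Real.sin_add_int_mul_pi]
  have hsgn : ((-1:ℝ))^n ≠ 0 := by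
    intro h
    have h2 : ((-1:ℝ))^n * ((-1:ℝ))^n = 1 := by
      rw [← zpow_add₀ (by norm_num : (-1:ℝ) ≠ 0), show n + n = 2 * n by ring,
        zpow_mul]
      norm_num
    rw [h, mul_zero] at h2
    exact zero_ne_one h2
  have hδ'ne : δ' ≠ -(π/2) := by
    intro h
    apply hcδ
    rw [hcosrel, h, Real.cos_neg, Real.cos_pi_div_two, mul_zero]
  have hcδ' : 0 < Real.cos δ' :=
    Real.cos_pos_of_mem_Ioo ⟨lt_of_le_of_ne hδ'lo (Ne.symm hδ'ne), hδ'hi⟩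
  have hcδ'' : Real.cos δ' ≠ 0 := ne_of_gt hcδ'
  have hx1' : x.1 = Real.cos μ' / Real.cos δ' := by
    rw [eq_div_iff hcδ'']
    rw [hcosrel, hcosμ] at hx1
    have h' : ((-1:ℝ))^n * (x.1 * Real.cos δ') = ((-1:ℝ))^n * Real.cos μ' := by
      linear_combination hx1
    exact mul_left_cancel₀ hsgn h'
  have hx2' : x.2 = Real.sin μ' / Real.cos δ' := by
    rw [eq_div_iff hcδ'']
    rw [hcosrel, hsinμ] at hx2
    have h' : ((-1:ℝ))^n * (x.2 * Real.cos δ') = ((-1:ℝ))^n * Real.sin μ' := by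
      linear_combination hx2
    exact mul_left_cancel₀ hsgn h'
  have hxpt : x = pt μ' δ' := by
    rw [Prod.ext_iff]
    exact ⟨by simpa [pt] using hx1', by simpa [pt] using hx2'⟩
  have hμ'' : μ' = 2*π*(j:ℝ)/ℓ + δ' := by rw [hμ', hμ0, hδ']; ring
  -- constraints for all integers z
  have hcon : ∀ z : ℤ, Real.cos ((z:ℝ) * (2*π/ℓ) + (-μ')) ≤ Real.cos δ' := by
    intro z
    obtain ⟨k, hk⟩ : ∃ k : ℕ, k = (z % ℓ).toNat := ⟨_, rfl⟩
    have hzk : ((k:ℤ)) = z % ℓ := by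
      rw [hk]; exact Int.toNat_of_nonneg (Int.emod_nonneg z (by exact_mod_cast hℓ0'.ne'))
    have hkl : k < ℓ := by
      have := Int.emod_lt_of_pos z (by exact_mod_cast hℓ0' : (0:ℤ) < ℓ)
      omega
    have hLf := mem_Cgon_iff.1 hx0 k hkl
    rw [hxpt, Lf_pt, div_le_one hcδ'] at hLf
    rw [show 2 * π * (k:ℝ) / ℓ + 0 - μ' = (((k:ℤ)):ℝ) * (2*π/ℓ) + (-μ') by push_cast; ring]
      at hLf
    have hdvd : (ℓ:ℤ) ∣ (z - (k:ℤ)) :=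
      ⟨z / ℓ, by rw [hzk]; linear_combination (Int.emod_add_mul_ediv z ℓ).symm⟩
    rwa [cos_grid_congr hℓ0' hdvd (-μ')]
  have ep : Real.cos ((2*π/ℓ) + δ') ≤ Real.cos δ' := by
    have h' := hcon ((j:ℤ) - 1)
    rw [show (((j:ℤ) - 1 : ℤ):ℝ) * (2*π/ℓ) + (-μ') = -((2*π/ℓ) + δ') by
      rw [hμ'']; push_cast; ring] at h'
    rwa [Real.cos_neg] at h'
  have em : Real.cos ((2*π/ℓ) - δ') ≤ Real.cos δ' := by
    have h' := hcon ((j:ℤ) + 1)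
    rwa [show (((j:ℤ) + 1 : ℤ):ℝ) * (2*π/ℓ) + (-μ') = (2*π/ℓ) - δ' by
      rw [hμ'']; push_cast; ring] at h'
  have hsinπℓ : 0 < Real.sin (π/ℓ) :=
    Real.sin_pos_of_pos_of_lt_pi hπℓ (by linarith)
  have kp : 0 ≤ Real.sin (π/ℓ + δ') := by
    have hcc := Real.cos_sub_cos ((2*π/ℓ) + δ') δ'
    rw [show ((2*π/ℓ) + δ' + δ')/2 = π/ℓ + δ' by ring,
      show ((2*π/ℓ) + δ' - δ')/2 = π/ℓ by ring] at hcc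
    have h5 : 0 ≤ Real.sin (π/ℓ + δ') * Real.sin (π/ℓ) := by linarith
    by_contra hneg
    push_neg at hneg
    have := mul_neg_of_neg_of_pos hneg hsinπℓ
    linarith
  have km : 0 ≤ Real.sin (π/ℓ - δ') := by
    have hcc := Real.cos_sub_cos ((2*π/ℓ) - δ') δ'
    rw [show ((2*π/ℓ) - δ' + δ')/2 = π/ℓ by ring,
      show ((2*π/ℓ) - δ' - δ')/2 = π/ℓ - δ' by ring] at hcc
    have h5 : 0 ≤ Real.sin (π/ℓ - δ') * Real.sin (π/ℓ) := by linarith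
    by_contra hneg
    push_neg at hneg
    have := mul_neg_of_neg_of_pos hneg hsinπℓ
    linarith
  have hb1 : δ' ≤ π/ℓ := by
    by_contra hcon2
    push_neg at hcon2
    have hlt : π/ℓ - δ' < 0 := by linarith only [hcon2]
    have hgt : -π < π/ℓ - δ' := by linarith only [hδ'hi, hπℓ, hπ]
    linarith only [Real.sin_neg_of_neg_of_neg_pi_lt hlt hgt, km]
  have hb2 : -(π/ℓ) ≤ δ' := by
    by_contra hcon2
    push_neg at hcon2
    have hlt : π/ℓ + δ' < 0 := by linarith only [hcon2, hπℓ]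
    have hgt : -π < π/ℓ + δ' := by linarith only [hδ'lo, hπℓ, hπ]
    linarith only [Real.sin_neg_of_neg_of_neg_pi_lt hlt hgt, kp]
  -- pin down u
  obtain ⟨u, hu⟩ : ∃ u : ℤ, u = (m:ℤ) - (j:ℤ) - n * ℓ := ⟨_, rfl⟩
  have hueq : 2 * δ' = (u:ℝ) * (2*π/ℓ) + θ := by
    rw [hδ', hδ0, hu]
    push_cast
    field_simp
    ring
  have hαpos : (0:ℝ) < 2*π/ℓ := by positivity
  have huhi : (u:ℝ) < 1 := by
    have h6 : (u:ℝ) * (2*π/ℓ) < 1 * (2*π/ℓ) := by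
      rw [one_mul]
      have h7 : (u:ℝ) * (2*π/ℓ) = 2*δ' - θ := by linarith only [hueq]
      rw [h7, h2πℓ]
      linarith only [hb1, hθ0]
    exact lt_of_mul_lt_mul_right h6 hαpos.le
  have hulo : (-2:ℝ) < (u:ℝ) := by
    have h6 : (-2:ℝ) * (2*π/ℓ) < (u:ℝ) * (2*π/ℓ) := by
      have h7 : (u:ℝ) * (2*π/ℓ) = 2*δ' - θ := by linarith only [hueq]
      rw [h7, h2πℓ]
      linarith only [hb2, hθ, h2πℓ]
    exact lt_of_mul_lt_mul_right h6 hαpos.le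
  have hu' : u = 0 ∨ u = -1 := by
    have h1' : u < 1 := by exact_mod_cast huhi
    have h2' : -2 < u := by exact_mod_cast hulo
    omega
  rcases hu' with h | h
  · left
    refine ⟨j, by simpa using hj, ?_⟩
    have hδval : δ' = θ/2 := by
      rw [h] at hueq; push_cast at hueq; linarith
    rw [hxpt, Ppt, ← hδval, hμ'']
  · right
    refine ⟨j, by simpa using hj, ?_⟩
    have hδval : δ' = (θ - 2*π/ℓ)/2 := by
      rw [h] at hueq; push_cast at hueq; linarith
    rw [hxpt, Qpt, ← hδval, hμ'']

-- real work
lemma pt_inj {μ1 μ2 δ1 δ2 : ℝ} (h1 : 0 < Real.cos δ1) (h2 : 0 < Real.cos δ2)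
    (h : pt μ1 δ1 = pt μ2 δ2) : ∃ n : ℤ, μ1 - μ2 = n * (2 * π) := by
  have hc1 : Real.cos δ1 ≠ 0 := ne_of_gt h1
  have hc2 : Real.cos δ2 ≠ 0 := ne_of_gt h2
  have e1 : Real.cos μ1 / Real.cos δ1 = Real.cos μ2 / Real.cos δ2 :=
    congrArg Prod.fst h
  have e2 : Real.sin μ1 / Real.cos δ1 = Real.sin μ2 / Real.cos δ2 :=
    congrArg Prod.snd h
  rw [div_eq_div_iff hc1 hc2] at e1 e2
  have p1 := Real.sin_sq_add_cos_sq μ1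
  have p2 := Real.sin_sq_add_cos_sq μ2
  have hcc : Real.cos δ2 ^ 2 = Real.cos δ1 ^ 2 := by
    linear_combination (Real.cos μ1 * Real.cos δ2 + Real.cos μ2 * Real.cos δ1) * e1
      + (Real.sin μ1 * Real.cos δ2 + Real.sin μ2 * Real.cos δ1) * e2
      - Real.cos δ2 ^ 2 * p1 + Real.cos δ1 ^ 2 * p2
  have hδeq : Real.cos δ2 = Real.cos δ1 := by nlinarith [hcc, h1, h2]
  rw [hδeq] at e1 e2
  have hμc : Real.cos μ1 = Real.cos μ2 := mul_right_cancel₀ hc1 e1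
  have hμs : Real.sin μ1 = Real.sin μ2 := mul_right_cancel₀ hc1 e2
  have hone : Real.cos (μ1 - μ2) = 1 := by
    rw [Real.cos_sub, hμc, hμs]
    linear_combination p2
  obtain ⟨n, hn⟩ := (Real.cos_eq_one_iff _).1 hone
  exact ⟨n, hn.symm⟩

lemma key_count {ℓ : ℕ} (hℓ0 : 0 < ℓ) {c n : ℤ} (h : (c:ℝ) * (π / ℓ) = n * (2 * π)) :
    c = 2 * n * ℓ := by
  have hπ : Real.pi ≠ 0 := Real.pi_ne_zero
  have hl : (ℓ:ℝ) ≠ 0 := by positivity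
  have h2 : (c:ℝ) * π = (2 * (n:ℝ) * ℓ) * π := by
    field_simp at h
    rw [h]; ring
  have h3 : (c:ℝ) = 2 * (n:ℝ) * ℓ := mul_right_cancel₀ hπ h2
  exact_mod_cast h3

lemma nz_zero {ℓ : ℕ} {n j k : ℤ} (hjk : (j:ℤ) - k = n * ℓ) (hj1 : 0 ≤ j) (hj2 : j < ℓ)
    (hk1 : 0 ≤ k) (hk2 : k < ℓ) : j = k := by
  have hl : (0:ℤ) ≤ ℓ := by positivity
  rcases lt_trichotomy n 0 with h | h | h
  · exfalso
    have h1 : n ≤ -1 := by omega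
    have h2 : n * ℓ ≤ -1 * ℓ := mul_le_mul_of_nonneg_right h1 hl
    linarith
  · rw [h, zero_mul] at hjk; omega
  · exfalso
    have h1 : 1 ≤ n := h
    have h2 : 1 * (ℓ:ℤ) ≤ n * ℓ := mul_le_mul_of_nonneg_right h1 hl
    linarith

set_option maxHeartbeats 800000 in
/-- For 0 < θ < 2π/ℓ, the boundaries of C(0) and C(θ) cross in exactly
2ℓ points. -/
theorem rotated_gons_frontier_inter (ℓ : ℕ) (hℓ : 3 ≤ ℓ) (θ : ℝ)
    (hθ0 : 0 < θ) (hθ : θ < 2 * Real.pi / ℓ) :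
    (frontier (Cgon ℓ 0) ∩ frontier (Cgon ℓ θ)).ncard = 2 * ℓ := by
  have hℓ0 : (0:ℝ) < ℓ := by positivity
  have hℓ0' : 0 < ℓ := by omega
  have hπ := Real.pi_pos
  have h2πℓ : 2 * π / (ℓ:ℝ) = 2 * (π / ℓ) := by ring
  have hπℓ : 0 < π / (ℓ:ℝ) := by positivity
  have hπℓ2 : π / (ℓ:ℝ) < π / 2 := by
    apply div_lt_div_of_pos_left Real.pi_pos (by norm_num)
    exact_mod_cast (by omega : 2 < ℓ)
  have hcP : 0 < Real.cos (θ / 2) :=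
    Real.cos_pos_of_mem_Ioo ⟨by linarith, by linarith⟩
  have hcQ : 0 < Real.cos ((θ - 2 * π / ℓ) / 2) :=
    Real.cos_pos_of_mem_Ioo ⟨by linarith, by linarith⟩
  -- the set equality
  have hSeq : frontier (Cgon ℓ 0) ∩ frontier (Cgon ℓ θ)
      = (Ppt ℓ θ) '' ↑(Finset.range ℓ) ∪ (Qpt ℓ θ) '' ↑(Finset.range ℓ) := by
    apply subset_antisymm (inter_subset hℓ hθ0 hθ)
    apply union_subset
    · rintro x ⟨j, hj, rfl⟩
      rw [Finset.mem_coe, Finset.mem_range] at hj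
      obtain ⟨⟨hm0, ht0⟩, hmθ, htθ⟩ := Ppt_spec hℓ hθ0 hθ hj
      constructor
      · rw [frontier_Cgon]; exact ⟨hm0, j, hj, ht0⟩
      · rw [frontier_Cgon]; exact ⟨hmθ, j, hj, htθ⟩
    · rintro x ⟨j, hj, rfl⟩
      rw [Finset.mem_coe, Finset.mem_range] at hj
      obtain ⟨⟨hm0, ht0⟩, hmθ, htθ⟩ := Qpt_spec hℓ hθ0 hθ hj
      constructor
      · rw [frontier_Cgon]; exact ⟨hm0, j, hj, ht0⟩
      · rw [frontier_Cgon]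
        exact ⟨hmθ, (j + ℓ - 1) % ℓ, Nat.mod_lt _ hℓ0', htθ⟩
  rw [hSeq]
  -- injectivity of P
  have hinjP : Set.InjOn (Ppt ℓ θ) ↑(Finset.range ℓ) := by
    intro j hj k hk hjk
    rw [Finset.mem_coe, Finset.mem_range] at hj hk
    simp only [Ppt] at hjk
    obtain ⟨n, hn⟩ := pt_inj hcP hcP hjk
    have hc : ((2 * ((j:ℤ) - k) : ℤ) : ℝ) * (π / ℓ) = n * (2 * π) := by
      push_cast
      rw [← hn]
      field_simp
      ring
    have := key_count hℓ0' hc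
    have hjk' : (j:ℤ) - k = n * ℓ := by linarith
    exact_mod_cast nz_zero hjk' (by positivity) (by exact_mod_cast hj)
      (by positivity) (by exact_mod_cast hk)
  have hinjQ : Set.InjOn (Qpt ℓ θ) ↑(Finset.range ℓ) := by
    intro j hj k hk hjk
    rw [Finset.mem_coe, Finset.mem_range] at hj hk
    simp only [Qpt] at hjk
    obtain ⟨n, hn⟩ := pt_inj hcQ hcQ hjk
    have hc : ((2 * ((j:ℤ) - k) : ℤ) : ℝ) * (π / ℓ) = n * (2 * π) := by
      push_cast
      rw [← hn]
      field_simp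
      ring
    have := key_count hℓ0' hc
    have hjk' : (j:ℤ) - k = n * ℓ := by linarith
    exact_mod_cast nz_zero hjk' (by positivity) (by exact_mod_cast hj)
      (by positivity) (by exact_mod_cast hk)
  -- disjointness
  have hdisj : Disjoint ((Ppt ℓ θ) '' ↑(Finset.range ℓ)) ((Qpt ℓ θ) '' ↑(Finset.range ℓ)) := by
    rw [Set.disjoint_left]
    rintro x ⟨j, hj, rfl⟩ ⟨k, hk, hPQ⟩
    simp only [Ppt, Qpt] at hPQ
    obtain ⟨n, hn⟩ := pt_inj hcQ hcP hPQ
    have hc : ((2 * ((k:ℤ) - j) - 1 : ℤ) : ℝ) * (π / ℓ) = n * (2 * π) := by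
      push_cast
      rw [← hn]
      field_simp
      ring
    have h2 := key_count hℓ0' hc
    have hodd : Odd (2 * ((k:ℤ) - j) - 1) := ⟨(k:ℤ) - j - 1, by ring⟩
    rw [h2] at hodd
    have heven : Even (2 * n * (ℓ:ℤ)) := ⟨n * ℓ, by ring⟩
    exact (Int.not_odd_iff_even.2 heven) hodd
  rw [Set.ncard_union_eq hdisj ((Finset.range ℓ).finite_toSet.image _)
    ((Finset.range ℓ).finite_toSet.image _),
    Set.ncard_image_of_injOn hinjP, Set.ncard_image_of_injOn hinjQ,
    Set.ncard_coe_finset, Finset.card_range]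
  omega
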